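/- arXiv:1403.6802 — 2 statements merged into one kernel-verified Lean document; each statement's English description precedes it below -/
import Mathlib

section
/- Let K_P > 0 and 0 < τ < π/(2K_P). Then for all ω > 0, K_P e^{-jτω}/(jω) ≠ -1. -/
open Real Complex

/-
At a solution of T(jω) = -1 the modulus forces ω = K_P, and the real part forces
cos(τω) = 0. But then τω = τK_P lies in (0, π/2), where the cosine is positive.
-/

lemma abs_eq_abs_of_mul_exp_eq_neg_I_mul {K ω θ : ℝ}
    (h : (K : ℂ) * exp (θ * I) = -(I * ω)) : |K| = |ω| := by
  simpa [norm_mul, norm_exp_ofReal_mul_I] using congrArg (‖·‖) h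

lemma cos_eq_zero_of_mul_exp_eq_neg_I_mul {K ω θ : ℝ} (hK : K ≠ 0)
    (h : (K : ℂ) * exp (θ * I) = -(I * ω)) : Real.cos θ = 0 := by
  have hre : K * Real.cos θ = 0 := by
    simpa [mul_re, exp_ofReal_mul_I_re, exp_ofReal_mul_I_im] using congrArg re h
  exact (mul_eq_zero.mp hre).resolve_left hK

theorem stmt_8 (K_P τ : ℝ) (hK : 0 < K_P) (hτ0 : 0 < τ) (hτ : τ < π / (2 * K_P)) :
    ∀ ω : ℝ, 0 < ω →
      (K_P : ℂ) * Complex.exp (-Complex.I * τ * ω) / (Complex.I * ω) ≠ -1 := by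
  intro ω hω h
  have hIω : I * (ω : ℂ) ≠ 0 := mul_ne_zero I_ne_zero (ofReal_ne_zero.mpr hω.ne')
  have hexp : -I * (τ : ℂ) * ω = ((-(τ * ω) : ℝ) : ℂ) * I := by push_cast; ring
  rw [div_eq_iff hIω, hexp, neg_one_mul] at h
  have hω_eq : K_P = ω := by
    simpa [abs_of_pos hK, abs_of_pos hω] using abs_eq_abs_of_mul_exp_eq_neg_I_mul h
  have hcos : Real.cos (τ * ω) = 0 := by
    simpa using cos_eq_zero_of_mul_exp_eq_neg_I_mul hK.ne' h
  have hlt : τ * ω < π / 2 := by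
    rw [← hω_eq]
    rw [lt_div_iff₀ (by positivity)] at hτ
    linarith
  have hpos : 0 < Real.cos (τ * ω) :=
    cos_pos_of_mem_Ioo ⟨by linarith [pi_pos, mul_pos hτ0 hω], hlt⟩
  exact hpos.ne' hcos
end

section
/- If F is constant on the interval [t-τ, t], then the estimator F_est(t) = -(6/τ³) ∫_{t-τ}^{t} [(τ - 2σ')y(t-τ+σ') + α σ'(τ - σ')u(t-τ+σ')] dσ' recovers F exactly, where y satisfies ẏ = F + αu on [t-τ, t]. Equivalently, with the change of variable to [0, τ]: if ẏ(s) = F + αu(s) on [0,τ] with F constant, then -(6/τ³)∫_0^τ [(τ-2σ)y(σ) + ασ(τ-σ)u(σ)]dσ = F. -/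
/-! The weight `g σ = σ (τ - σ)` vanishes at both ends of `[0, τ]` and has `g' σ = τ - 2σ`, so
integration by parts gives `∫ (g' y + g ẏ) = 0`. Substituting `ẏ = F + α u`, the integrand of the
estimator is `g' y + g ẏ - F g`, whose integral is `-F ∫ g = -F τ³ / 6`. -/

open Real intervalIntegral

theorem hasDerivAt_mul_sub_self (τ x : ℝ) :
    HasDerivAt (fun σ => σ * (τ - σ)) (τ - 2 * x) x :=
  ((hasDerivAt_id' x).mul ((hasDerivAt_id' x).const_sub τ)).congr_deriv (by ring)

theorem integral_mul_sub_self (τ : ℝ) : ∫ σ in (0 : ℝ)..τ, σ * (τ - σ) = τ ^ 3 / 6 := by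
  have hpoly : (fun σ : ℝ => σ * (τ - σ)) = fun σ => τ * σ - σ ^ 2 := by
    ext σ
    ring
  rw [hpoly, integral_sub (Continuous.intervalIntegrable (by fun_prop) _ _)
    (Continuous.intervalIntegrable (by fun_prop) _ _), integral_const_mul, integral_id,
    integral_pow]
  ring

theorem stmt_14 (τ α F : ℝ) (hτ : 0 < τ) (u y : ℝ → ℝ)
    (hu : ContinuousOn u (Set.Icc 0 τ))
    (hy : ∀ s ∈ Set.Icc (0 : ℝ) τ, HasDerivAt y (F + α * u s) s) :
    -(6 / τ ^ 3) *
        ∫ σ in (0 : ℝ)..τ, ((τ - 2 * σ) * y σ + α * σ * (τ - σ) * u σ) = F := by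
  rw [← Set.uIcc_of_le hτ.le] at hu hy
  have hyc : ContinuousOn y (Set.uIcc 0 τ) := fun s hs => (hy s hs).continuousAt.continuousWithinAt
  have hparts : ∫ σ in (0 : ℝ)..τ, (τ - 2 * σ) * y σ + σ * (τ - σ) * (F + α * u σ) = 0 := by
    simpa using integral_deriv_mul_eq_sub (fun x _ => hasDerivAt_mul_sub_self τ x) hy
      (Continuous.intervalIntegrable (by fun_prop) _ _)
      ((continuousOn_const.add (continuousOn_const.mul hu)).intervalIntegrable)
  have hsplit : ∫ σ in (0 : ℝ)..τ, ((τ - 2 * σ) * y σ + α * σ * (τ - σ) * u σ)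
      = (∫ σ in (0 : ℝ)..τ, (τ - 2 * σ) * y σ + σ * (τ - σ) * (F + α * u σ))
        - ∫ σ in (0 : ℝ)..τ, F * (σ * (τ - σ)) := by
    rw [← integral_sub (ContinuousOn.intervalIntegrable (by fun_prop))
      (Continuous.intervalIntegrable (by fun_prop) _ _)]
    congr 1 with σ
    ring
  rw [hsplit, hparts, integral_const_mul, integral_mul_sub_self]
  field_simp
  ring
end
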